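/- arXiv:math/0611799 — 4 statements merged into one kernel-verified Lean document; each statement's English description precedes it below -/
import Mathlib

section
/- Let K be a commutative ring and R a commutative K-algebra. Let (A,a) and (B,b) be Lie–Rinehart algebras over (K,R), let ρ be a representation of A on B and σ a representation of B on A, and suppose the three matched pair equations hold: (i) ρ_X(⁅Y1,Y2⁆) = ⁅ρ_X(Y1), Y2⁆ + ⁅Y1, ρ_X(Y2)⁆ + ρ_{σ_{Y2}(X)}(Y1) − ρ_{σ_{Y1}(X)}(Y2); (ii) σ_Y(⁅X1,X2⁆) = ⁅σ_Y(X1), X2⁆ + ⁅X1, σ_Y(X2)⁆ + σ_{ρ_{X2}(Y)}(X1) − σ_{ρ_{X1}(Y)}(X2); (iii) a(σ_Y(X)) − b(ρ_X(Y)) = ⁅b(Y), a(X)⁆ in Der_K(R), for all X, X1, X2 ∈ A and Y, Y1, Y2 ∈ B. Then the R-module direct sum A ⊕ B, equipped with the anchor c(X ⊕ Y) = a(X) + b(Y) and the bracket ⁅X1 ⊕ Y1, X2 ⊕ Y2⁆ = (⁅X1,X2⁆ + σ_{Y1}(X2) − σ_{Y2}(X1)) ⊕ (⁅Y1,Y2⁆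 + ρ_{X1}(Y2) − ρ_{X2}(Y1)), is a Lie–Rinehart algebra over (K,R), and the inclusions X ↦ X ⊕ 0 and Y ↦ 0 ⊕ Y are morphisms of Lie–Rinehart algebras (R-linear, bracket-preserving and anchor-preserving). -/
/-- A Lie–Rinehart algebra structure over `(K, R)` on the `R`-module `L`:
a `K`-bilinear, alternating bracket satisfying the Jacobi identity, together with an
`R`-linear anchor into the `K`-linear derivations of `R` which preserves brackets and
satisfies the Leibniz rule. -/
structure IsLieRinehart (K R : Type*) [CommRing K] [CommRing R] [Algebra K R]
    (L : Type*) [AddCommGroup L] [Module K L] [Module R L] [IsScalarTower K R L]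
    (br : L → L → L) (anchor : L → Derivation K R R) : Prop where
  add_left : ∀ x y z, br (x + y) z = br x z + br y z
  smul_left : ∀ (k : K) (x z : L), br (k • x) z = k • br x z
  add_right : ∀ x y z, br x (y + z) = br x y + br x z
  smul_right : ∀ (k : K) (x z : L), br x (k • z) = k • br x z
  alternate : ∀ x, br x x = 0
  jacobi : ∀ x y z, br (br x y) z + br (br y z) x + br (br z x) y = 0
  anchor_add : ∀ x y, anchor (x + y) = anchor x + anchor y
  anchor_smul : ∀ (r : R) (x : L), anchor (r • x) = r • anchor x
  anchor_bracket : ∀ x y, anchor (br x y) = ⁅anchor x, anchor y⁆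
  leibniz : ∀ (x : L) (r : R) (y : L), br x (r • y) = r • br x y + anchor x r • y

/-- A representation of the Lie–Rinehart algebra `(A, aA)` (with bracket `brA`)
on the `R`-module underlying `B`. -/
structure IsLRRep (K R : Type*) [CommRing K] [CommRing R] [Algebra K R]
    (A : Type*) [AddCommGroup A] [Module K A] [Module R A] [IsScalarTower K R A]
    (B : Type*) [AddCommGroup B] [Module K B] [Module R B] [IsScalarTower K R B]
    (brA : A → A → A) (aA : A → Derivation K R R) (ρ : A → B → B) : Prop where
  add_arg : ∀ (X : A) (Y₁ Y₂ : B), ρ X (Y₁ + Y₂) = ρ X Y₁ + ρ X Y₂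
  smul_arg : ∀ (k : K) (X : A) (Y : B), ρ X (k • Y) = k • ρ X Y
  add_act : ∀ (X₁ X₂ : A) (Y : B), ρ (X₁ + X₂) Y = ρ X₁ Y + ρ X₂ Y
  smul_act : ∀ (r : R) (X : A) (Y : B), ρ (r • X) Y = r • ρ X Y
  leibniz : ∀ (X : A) (r : R) (Y : B), ρ X (r • Y) = r • ρ X Y + aA X r • Y
  bracket_act : ∀ (X₁ X₂ : A) (Y : B),
    ρ (brA X₁ X₂) Y = ρ X₁ (ρ X₂ Y) - ρ X₂ (ρ X₁ Y)

section Helpers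
variable {K R : Type*} [CommRing K] [CommRing R] [Algebra K R]
variable {L : Type*} [AddCommGroup L] [Module K L] [Module R L] [IsScalarTower K R L]
variable {br : L → L → L} {anchor : L → Derivation K R R}

lemma IsLieRinehart.neg_left (h : IsLieRinehart K R L br anchor) (x z : L) :
    br (-x) z = -br x z := by
  rw [← neg_one_smul K x, h.smul_left, neg_one_smul]

lemma IsLieRinehart.neg_right (h : IsLieRinehart K R L br anchor) (x z : L) :
    br x (-z) = -br x z := by
  rw [← neg_one_smul K z, h.smul_right, neg_one_smul]

lemma IsLieRinehart.sub_left (h : IsLieRinehart K R L br anchor) (x y z : L) :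
    br (x - y) z = br x z - br y z := by
  rw [sub_eq_add_neg, h.add_left, h.neg_left, ← sub_eq_add_neg]

lemma IsLieRinehart.sub_right (h : IsLieRinehart K R L br anchor) (x y z : L) :
    br x (y - z) = br x y - br x z := by
  rw [sub_eq_add_neg, h.add_right, h.neg_right, ← sub_eq_add_neg]

lemma IsLieRinehart.antisym (h : IsLieRinehart K R L br anchor) (x y : L) :
    br y x = -br x y := by
  have h0 := h.alternate (x + y)
  rw [h.add_left, h.add_right, h.add_right, h.alternate, h.alternate, zero_add, add_zero] at h0
  exact eq_neg_of_add_eq_zero_right h0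

lemma IsLieRinehart.anchor_neg (h : IsLieRinehart K R L br anchor) (x : L) :
    anchor (-x) = -anchor x := by
  rw [← neg_one_smul R x, h.anchor_smul, neg_one_smul]

lemma IsLieRinehart.anchor_sub (h : IsLieRinehart K R L br anchor) (x y : L) :
    anchor (x - y) = anchor x - anchor y := by
  rw [sub_eq_add_neg, h.anchor_add, h.anchor_neg, ← sub_eq_add_neg]

lemma IsLieRinehart.anchor_zero (h : IsLieRinehart K R L br anchor) :
    anchor 0 = 0 := by
  simpa using h.anchor_smul 0 0

lemma IsLieRinehart.anchor_Ksmul (h : IsLieRinehart K R L br anchor) (k : K) (x : L) :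
    anchor (k • x) = k • anchor x := by
  rw [← algebraMap_smul R k x, h.anchor_smul, algebraMap_smul]

end Helpers

section RepHelpers
variable {K R : Type*} [CommRing K] [CommRing R] [Algebra K R]
variable {A : Type*} [AddCommGroup A] [Module K A] [Module R A] [IsScalarTower K R A]
variable {B : Type*} [AddCommGroup B] [Module K B] [Module R B] [IsScalarTower K R B]
variable {brA : A → A → A} {aA : A → Derivation K R R} {ρ : A → B → B}

lemma IsLRRep.neg_arg (h : IsLRRep K R A B brA aA ρ) (X : A) (Y : B) :
    ρ X (-Y) = -ρ X Y := by rw [← neg_one_smul K Y, h.smul_arg, neg_one_smul]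

lemma IsLRRep.sub_arg (h : IsLRRep K R A B brA aA ρ) (X : A) (Y₁ Y₂ : B) :
    ρ X (Y₁ - Y₂) = ρ X Y₁ - ρ X Y₂ := by
  rw [sub_eq_add_neg, h.add_arg, h.neg_arg, ← sub_eq_add_neg]

lemma IsLRRep.neg_act (h : IsLRRep K R A B brA aA ρ) (X : A) (Y : B) :
    ρ (-X) Y = -ρ X Y := by rw [← neg_one_smul R X, h.smul_act, neg_one_smul]

lemma IsLRRep.sub_act (h : IsLRRep K R A B brA aA ρ) (X₁ X₂ : A) (Y : B) :
    ρ (X₁ - X₂) Y = ρ X₁ Y - ρ X₂ Y := by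
  rw [sub_eq_add_neg, h.add_act, h.neg_act, ← sub_eq_add_neg]

lemma IsLRRep.Ksmul_act (h : IsLRRep K R A B brA aA ρ) (k : K) (X : A) (Y : B) :
    ρ (k • X) Y = k • ρ X Y := by
  rw [← algebraMap_smul R k X, h.smul_act, algebraMap_smul]

lemma IsLRRep.zero_arg (h : IsLRRep K R A B brA aA ρ) (X : A) : ρ X 0 = 0 := by
  simpa using h.smul_arg 0 X 0

lemma IsLRRep.zero_act (h : IsLRRep K R A B brA aA ρ) (Y : B) : ρ 0 Y = 0 := by
  simpa using h.smul_act 0 0 Y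

end RepHelpers

/-- The bracket on the direct sum `A ⊕ B` determined by a matched pair `(ρ, σ)`. -/
def matchedPairBracket {A B : Type*} [AddCommGroup A] [AddCommGroup B] (brA : A → A → A) (brB : B → B → B)
    (ρ : A → B → B) (σ : B → A → A) : A × B → A × B → A × B :=
  fun p q => (brA p.1 q.1 + σ p.2 q.1 - σ q.2 p.1,
              brB p.2 q.2 + ρ p.1 q.2 - ρ q.1 p.2)

/-- **Matched pairs give Lie–Rinehart algebras on the direct sum.**
Given Lie–Rinehart algebras `(A, aA)` and `(B, aB)` over `(K, R)`, representations
`ρ` of `A` on `B` and `σ` of `B` on `A` satisfying the three matched pair equations,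
the direct sum `A ⊕ B` with anchor `c(X ⊕ Y) = aA X + aB Y` and bracket
`⁅X₁ ⊕ Y₁, X₂ ⊕ Y₂⁆ = (⁅X₁,X₂⁆ + σ_{Y₁} X₂ − σ_{Y₂} X₁) ⊕ (⁅Y₁,Y₂⁆ + ρ_{X₁} Y₂ − ρ_{X₂} Y₁)`
is a Lie–Rinehart algebra over `(K, R)`, and the (`R`-linear) inclusions of `A` and `B`
are bracket- and anchor-preserving. -/
theorem matchedPair_to_lieRinehart
    (K R : Type*) [CommRing K] [CommRing R] [Algebra K R]
    (A : Type*) [AddCommGroup A] [Module K A] [Module R A] [IsScalarTower K R A]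
    (B : Type*) [AddCommGroup B] [Module K B] [Module R B] [IsScalarTower K R B]
    (brA : A → A → A) (aA : A → Derivation K R R)
    (brB : B → B → B) (aB : B → Derivation K R R)
    (hA : IsLieRinehart K R A brA aA) (hB : IsLieRinehart K R B brB aB)
    (ρ : A → B → B) (σ : B → A → A)
    (hρ : IsLRRep K R A B brA aA ρ) (hσ : IsLRRep K R B A brB aB σ)
    (mp1 : ∀ (X : A) (Y₁ Y₂ : B), ρ X (brB Y₁ Y₂) =
      brB (ρ X Y₁) Y₂ + brB Y₁ (ρ X Y₂) + ρ (σ Y₂ X) Y₁ - ρ (σ Y₁ X) Y₂)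
    (mp2 : ∀ (Y : B) (X₁ X₂ : A), σ Y (brA X₁ X₂) =
      brA (σ Y X₁) X₂ + brA X₁ (σ Y X₂) + σ (ρ X₂ Y) X₁ - σ (ρ X₁ Y) X₂)
    (mp3 : ∀ (X : A) (Y : B), aA (σ Y X) - aB (ρ X Y) = ⁅aB Y, aA X⁆) :
    IsLieRinehart K R (A × B) (matchedPairBracket brA brB ρ σ)
        (fun p => aA p.1 + aB p.2)
    ∧ (∀ X₁ X₂ : A, matchedPairBracket brA brB ρ σ
        (LinearMap.inl R A B X₁) (LinearMap.inl R A B X₂)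
          = LinearMap.inl R A B (brA X₁ X₂))
    ∧ (∀ Y₁ Y₂ : B, matchedPairBracket brA brB ρ σ
        (LinearMap.inr R A B Y₁) (LinearMap.inr R A B Y₂)
          = LinearMap.inr R A B (brB Y₁ Y₂))
    ∧ (∀ X : A, aA (LinearMap.inl R A B X).1 + aB (LinearMap.inl R A B X).2 = aA X)
    ∧ (∀ Y : B, aA (LinearMap.inr R A B Y).1 + aB (LinearMap.inr R A B Y).2 = aB Y) := by
  
  have JA : ∀ a b c : A, brA (brA c a) b = -(brA (brA a b) c + brA (brA b c) a) :=
    fun a b c => eq_neg_of_add_eq_zero_right (hA.jacobi a b c)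
  have JB : ∀ a b c : B, brB (brB c a) b = -(brB (brB a b) c + brB (brB b c) a) :=
    fun a b c => eq_neg_of_add_eq_zero_right (hB.jacobi a b c)
  have h3 : ∀ (X : A) (Y : B), aA (σ Y X) = ⁅aB Y, aA X⁆ + aB (ρ X Y) := by
    intro X Y
    have h0 := mp3 X Y
    rw [sub_eq_iff_eq_add] at h0
    exact h0
  refine ⟨⟨?_, ?_, ?_, ?_, ?_, ?_, ?_, ?_, ?_, ?_⟩, ?_, ?_, ?_, ?_⟩
  · -- add_left
    intro x y z
    simp only [matchedPairBracket, Prod.fst_add, Prod.snd_add, hA.add_left, hB.add_left,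
      hσ.add_act, hσ.add_arg, hρ.add_act, hρ.add_arg, Prod.mk_add_mk, Prod.mk.injEq]
    constructor <;> abel
  · -- smul_left
    intro k x z
    simp only [matchedPairBracket, Prod.smul_fst, Prod.smul_snd, hA.smul_left, hB.smul_left,
      hσ.Ksmul_act, hσ.smul_arg, hρ.Ksmul_act, hρ.smul_arg, Prod.smul_mk, Prod.mk.injEq,
      smul_add, smul_sub]
  · -- add_right
    intro x y z
    simp only [matchedPairBracket, Prod.fst_add, Prod.snd_add, hA.add_right, hB.add_right,
      hσ.add_act, hσ.add_arg, hρ.add_act, hρ.add_arg, Prod.mk_add_mk, Prod.mk.injEq]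
    constructor <;> abel
  · -- smul_right
    intro k x z
    simp only [matchedPairBracket, Prod.smul_fst, Prod.smul_snd, hA.smul_right, hB.smul_right,
      hσ.Ksmul_act, hσ.smul_arg, hρ.Ksmul_act, hρ.smul_arg, Prod.smul_mk, Prod.mk.injEq,
      smul_add, smul_sub]
  · -- alternate
    intro x
    simp [matchedPairBracket, hA.alternate, hB.alternate, Prod.ext_iff]
  · -- jacobi
    intro x y z
    obtain ⟨X1, Y1⟩ := x
    obtain ⟨X2, Y2⟩ := y
    obtain ⟨X3, Y3⟩ := z
    simp only [matchedPairBracket, Prod.mk_add_mk, Prod.mk_eq_zero]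
    constructor
    · -- A component
      simp only [hA.add_left, hA.sub_left, hσ.add_act, hσ.sub_act, hσ.add_arg, hσ.sub_arg]
      simp only [hσ.bracket_act, mp2]
      rw [hA.antisym (σ Y3 X2) X1, hA.antisym (σ Y1 X3) X2, hA.antisym (σ Y2 X1) X3,
        JA X1 X2 X3]
      abel
    · -- B component
      simp only [hB.add_left, hB.sub_left, hρ.add_act, hρ.sub_act, hρ.add_arg, hρ.sub_arg]
      simp only [hρ.bracket_act, mp1]
      rw [hB.antisym (ρ X3 Y2) Y1, hB.antisym (ρ X1 Y3) Y2, hB.antisym (ρ X2 Y1) Y3,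
        JB Y1 Y2 Y3]
      abel
  · -- anchor_add
    intro x y
    simp only [Prod.fst_add, Prod.snd_add, hA.anchor_add, hB.anchor_add]
    abel
  · -- anchor_smul
    intro r x
    simp only [Prod.smul_fst, Prod.smul_snd, hA.anchor_smul, hB.anchor_smul, smul_add]
  · -- anchor_bracket
    intro x y
    obtain ⟨X1, Y1⟩ := x
    obtain ⟨X2, Y2⟩ := y
    simp only [matchedPairBracket, hA.anchor_sub, hA.anchor_add, hB.anchor_sub, hB.anchor_add,
      hA.anchor_bracket, hB.anchor_bracket, h3]
    rw [add_lie, lie_add, lie_add,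
      show ⁅aA X1, aB Y2⁆ = -⁅aB Y2, aA X1⁆ from (lie_skew _ _).symm]
    abel
  · -- leibniz
    intro x r y
    obtain ⟨X1, Y1⟩ := x
    obtain ⟨X2, Y2⟩ := y
    simp only [matchedPairBracket, Prod.smul_fst, Prod.smul_snd, hA.leibniz, hB.leibniz,
      hσ.leibniz, hρ.leibniz, hσ.smul_act, hρ.smul_act, Derivation.add_apply,
      Prod.smul_mk, Prod.mk_add_mk, Prod.mk.injEq, smul_add, smul_sub, add_smul]
    constructor <;> abel
  · -- inclusion of A
    intro X1 X2
    simp [matchedPairBracket, hσ.zero_act, hρ.zero_arg, hB.alternate, Prod.ext_iff]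
  · -- inclusion of B
    intro Y1 Y2
    simp [matchedPairBracket, hρ.zero_act, hσ.zero_arg, hA.alternate, Prod.ext_iff]
  · intro X
    simp [hB.anchor_zero]
  · intro Y
    simp [hA.anchor_zero]
end

section
/- Let K be a commutative ring and R a commutative K-algebra, and let (A,a) and (B,b) be Lie–Rinehart algebras over (K,R). Suppose the R-module direct sum A ⊕ B carries a Lie–Rinehart algebra structure over (K,R), with anchor c and bracket ⁅·,·⁆, such that A ⊕ 0 and 0 ⊕ B are Lie–Rinehart subalgebras with the given structures, i.e. ⁅X1 ⊕ 0, X2 ⊕ 0⁆ = ⁅X1,X2⁆ ⊕ 0, ⁅0 ⊕ Y1, 0 ⊕ Y2⁆ = 0 ⊕ ⁅Y1,Y2⁆, c(X ⊕ 0) = a(X) and c(0 ⊕ Y) = b(Y). Define σ_Y(X) ∈ A and ρ_X(Y) ∈ B by ⁅X ⊕ 0, 0 ⊕ Y⁆ = (−σ_Y(X)) ⊕ ρ_X(Y). Then ρ is a representation of A on B, σ is a representation of B on A, and the three matched pair equations hold: (i) ρ_X(⁅Y1,Y2⁆) = ⁅ρ_X(Y1), Y2⁆ + ⁅Y1, ρ_X(Y2)⁆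 + ρ_{σ_{Y2}(X)}(Y1) − ρ_{σ_{Y1}(X)}(Y2); (ii) σ_Y(⁅X1,X2⁆) = ⁅σ_Y(X1), X2⁆ + ⁅X1, σ_Y(X2)⁆ + σ_{ρ_{X2}(Y)}(X1) − σ_{ρ_{X1}(Y)}(X2); (iii) a(σ_Y(X)) − b(ρ_X(Y)) = ⁅b(Y), a(X)⁆ in Der_K(R). -/
/-- **Lie–Rinehart structures on a direct sum with both summands as subalgebras give
matched pairs.** Let `(A, aA)` and `(B, aB)` be Lie–Rinehart algebras over `(K, R)`,
and suppose `A ⊕ B` carries a Lie–Rinehart structure `(br, c)` over `(K, R)` for which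
`A ⊕ 0` and `0 ⊕ B` are Lie–Rinehart subalgebras with the given structures. Defining
`σ_Y X ∈ A` and `ρ_X Y ∈ B` by `⁅X ⊕ 0, 0 ⊕ Y⁆ = (−σ_Y X) ⊕ ρ_X Y`, the map `ρ` is a
representation of `A` on `B`, `σ` is a representation of `B` on `A`, and the three
matched pair equations hold. -/
theorem lieRinehart_on_sum_to_matchedPair
    (K R : Type*) [CommRing K] [CommRing R] [Algebra K R]
    (A : Type*) [AddCommGroup A] [Module K A] [Module R A] [IsScalarTower K R A]
    (B : Type*) [AddCommGroup B] [Module K B] [Module R B] [IsScalarTower K R B]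
    (brA : A → A → A) (aA : A → Derivation K R R)
    (brB : B → B → B) (aB : B → Derivation K R R)
    (hA : IsLieRinehart K R A brA aA) (hB : IsLieRinehart K R B brB aB)
    (br : A × B → A × B → A × B) (c : A × B → Derivation K R R)
    (hD : IsLieRinehart K R (A × B) br c)
    (hsubA : ∀ X₁ X₂ : A, br (X₁, 0) (X₂, 0) = (brA X₁ X₂, 0))
    (hsubB : ∀ Y₁ Y₂ : B, br (0, Y₁) (0, Y₂) = (0, brB Y₁ Y₂))
    (hancA : ∀ X : A, c (X, 0) = aA X)
    (hancB : ∀ Y : B, c (0, Y) = aB Y)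
    (ρ : A → B → B) (σ : B → A → A)
    (hdef : ∀ (X : A) (Y : B), br (X, 0) (0, Y) = (-(σ Y X), ρ X Y)) :
    IsLRRep K R A B brA aA ρ
    ∧ IsLRRep K R B A brB aB σ
    ∧ (∀ (X : A) (Y₁ Y₂ : B), ρ X (brB Y₁ Y₂) =
        brB (ρ X Y₁) Y₂ + brB Y₁ (ρ X Y₂) + ρ (σ Y₂ X) Y₁ - ρ (σ Y₁ X) Y₂)
    ∧ (∀ (Y : B) (X₁ X₂ : A), σ Y (brA X₁ X₂) =
        brA (σ Y X₁) X₂ + brA X₁ (σ Y X₂) + σ (ρ X₂ Y) X₁ - σ (ρ X₁ Y) X₂)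
    ∧ (∀ (X : A) (Y : B), aA (σ Y X) - aB (ρ X Y) = ⁅aB Y, aA X⁆) := by

  -- negation and antisymmetry for the various brackets
  have negR : ∀ u v : A × B, br u (-v) = -(br u v) := by
    intro u v
    have h := hD.smul_right (-1 : K) u v
    rwa [neg_one_smul, neg_one_smul] at h
  have anti : ∀ u v : A × B, br v u = -(br u v) := by
    intro u v
    have h := hD.alternate (u + v)
    rw [hD.add_left, hD.add_right, hD.add_right, hD.alternate, hD.alternate,
      zero_add, add_zero] at h
    exact eq_neg_of_add_eq_zero_right h
  have hantiA : ∀ x y : A, brA y x = -(brA x y) := by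
    intro x y
    have h := hA.alternate (x + y)
    rw [hA.add_left, hA.add_right, hA.add_right, hA.alternate, hA.alternate,
      zero_add, add_zero] at h
    exact eq_neg_of_add_eq_zero_right h
  have hantiB : ∀ x y : B, brB y x = -(brB x y) := by
    intro x y
    have h := hB.alternate (x + y)
    rw [hB.add_left, hB.add_right, hB.add_right, hB.alternate, hB.alternate,
      zero_add, add_zero] at h
    exact eq_neg_of_add_eq_zero_right h
  have brAneg : ∀ x y : A, brA (-x) y = -(brA x y) := by
    intro x y
    have h := hA.smul_left (-1 : K) x y
    rwa [neg_one_smul, neg_one_smul] at h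
  have brBneg : ∀ x y : B, brB (-x) y = -(brB x y) := by
    intro x y
    have h := hB.smul_left (-1 : K) x y
    rwa [neg_one_smul, neg_one_smul] at h
  have hdef' : ∀ (X : A) (Y : B), br (0, Y) (X, 0) = (σ Y X, -(ρ X Y)) := by
    intro X Y
    rw [anti, hdef, Prod.neg_mk, neg_neg]
  -- splitting the bracket of a general element with elements of the summands
  have splitL : ∀ (p : A) (q : B) (X : A),
      br (p, q) (X, 0) = (brA p X + σ q X, -(ρ X q)) := by
    intro p q X
    have hpq : ((p, q) : A × B) = (p, 0) + (0, q) := by simp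
    rw [hpq, hD.add_left, hsubA, hdef', Prod.mk_add_mk, zero_add]
  have splitR : ∀ (p : A) (q : B) (Y : B),
      br (p, q) (0, Y) = (-(σ Y p), ρ p Y + brB q Y) := by
    intro p q Y
    have hpq : ((p, q) : A × B) = (p, 0) + (0, q) := by simp
    rw [hpq, hD.add_left, hsubB, hdef, Prod.mk_add_mk, add_zero]
  -- additivity
  have eaddR : ∀ (X : A) (Y₁ Y₂ : B),
      ((-(σ (Y₁ + Y₂) X), ρ X (Y₁ + Y₂)) : A × B)
        = (-(σ Y₁ X) + -(σ Y₂ X), ρ X Y₁ + ρ X Y₂) := by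
    intro X Y₁ Y₂
    have h := hD.add_right (X, 0) (0, Y₁) (0, Y₂)
    rwa [Prod.mk_add_mk, zero_add, hdef, hdef, hdef, Prod.mk_add_mk] at h
  have eaddL : ∀ (X₁ X₂ : A) (Y : B),
      ((-(σ Y (X₁ + X₂)), ρ (X₁ + X₂) Y) : A × B)
        = (-(σ Y X₁) + -(σ Y X₂), ρ X₁ Y + ρ X₂ Y) := by
    intro X₁ X₂ Y
    have h := hD.add_left (X₁, 0) (X₂, 0) (0, Y)
    rwa [Prod.mk_add_mk, add_zero, hdef, hdef, hdef, Prod.mk_add_mk] at h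
  -- K-linearity
  have esmulR : ∀ (k : K) (X : A) (Y : B),
      ((-(σ (k • Y) X), ρ X (k • Y)) : A × B) = (k • -(σ Y X), k • ρ X Y) := by
    intro k X Y
    have h := hD.smul_right k (X, 0) (0, Y)
    rwa [Prod.smul_mk, smul_zero, hdef, hdef, Prod.smul_mk] at h
  have esmulL : ∀ (k : K) (X : A) (Y : B),
      ((-(σ Y (k • X)), ρ (k • X) Y) : A × B) = (k • -(σ Y X), k • ρ X Y) := by
    intro k X Y
    have h := hD.smul_left k (X, 0) (0, Y)
    rwa [Prod.smul_mk, smul_zero, hdef, hdef, Prod.smul_mk] at h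
  -- Leibniz rules
  have eleibR : ∀ (X : A) (r : R) (Y : B),
      ((-(σ (r • Y) X), ρ X (r • Y)) : A × B)
        = (r • -(σ Y X), r • ρ X Y + aA X r • Y) := by
    intro X r Y
    have h := hD.leibniz (X, 0) r (0, Y)
    rwa [Prod.smul_mk, smul_zero, hdef, hdef, hancA, Prod.smul_mk, Prod.smul_mk,
      smul_zero, Prod.mk_add_mk, add_zero] at h
  have eleibL : ∀ (Y : B) (r : R) (X : A),
      ((σ Y (r • X), -(ρ (r • X) Y)) : A × B)
        = (r • σ Y X + aB Y r • X, r • -(ρ X Y)) := by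
    intro Y r X
    have h := hD.leibniz (0, Y) r (X, 0)
    rwa [Prod.smul_mk, smul_zero, hdef', hdef', hancB, Prod.smul_mk, Prod.smul_mk,
      smul_zero, Prod.mk_add_mk, add_zero] at h
  -- componentwise consequences: properties of ρ
  have ρadd_arg : ∀ (X : A) (Y₁ Y₂ : B), ρ X (Y₁ + Y₂) = ρ X Y₁ + ρ X Y₂ := by
    intro X Y₁ Y₂
    have h := eaddR X Y₁ Y₂
    rw [Prod.mk.injEq] at h
    exact h.2
  have ρsmul_arg : ∀ (k : K) (X : A) (Y : B), ρ X (k • Y) = k • ρ X Y := by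
    intro k X Y
    have h := esmulR k X Y
    rw [Prod.mk.injEq] at h
    exact h.2
  have ρadd_act : ∀ (X₁ X₂ : A) (Y : B), ρ (X₁ + X₂) Y = ρ X₁ Y + ρ X₂ Y := by
    intro X₁ X₂ Y
    have h := eaddL X₁ X₂ Y
    rw [Prod.mk.injEq] at h
    exact h.2
  have ρsmul_act : ∀ (r : R) (X : A) (Y : B), ρ (r • X) Y = r • ρ X Y := by
    intro r X Y
    have h := (Prod.mk.injEq _ _ _ _ ▸ eleibL Y r X : _ ∧ _).2
    rw [smul_neg] at h
    exact neg_injective h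
  have ρleib : ∀ (X : A) (r : R) (Y : B), ρ X (r • Y) = r • ρ X Y + aA X r • Y := by
    intro X r Y
    have h := eleibR X r Y
    rw [Prod.mk.injEq] at h
    exact h.2
  -- componentwise consequences: properties of σ
  have σadd_arg : ∀ (Y : B) (X₁ X₂ : A), σ Y (X₁ + X₂) = σ Y X₁ + σ Y X₂ := by
    intro Y X₁ X₂
    have h := eaddL X₁ X₂ Y
    rw [Prod.mk.injEq] at h
    have h1 := h.1
    rw [← neg_add] at h1
    exact neg_injective h1
  have σsmul_arg : ∀ (k : K) (Y : B) (X : A), σ Y (k • X) = k • σ Y X := by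
    intro k Y X
    have h := esmulL k X Y
    rw [Prod.mk.injEq] at h
    have h1 := h.1
    rw [smul_neg] at h1
    exact neg_injective h1
  have σadd_act : ∀ (Y₁ Y₂ : B) (X : A), σ (Y₁ + Y₂) X = σ Y₁ X + σ Y₂ X := by
    intro Y₁ Y₂ X
    have h := eaddR X Y₁ Y₂
    rw [Prod.mk.injEq] at h
    have h1 := h.1
    rw [← neg_add] at h1
    exact neg_injective h1
  have σsmul_actK : ∀ (k : K) (Y : B) (X : A), σ (k • Y) X = k • σ Y X := by
    intro k Y X
    have h := esmulR k X Y
    rw [Prod.mk.injEq] at h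
    have h1 := h.1
    rw [smul_neg] at h1
    exact neg_injective h1
  have σsmul_act : ∀ (r : R) (Y : B) (X : A), σ (r • Y) X = r • σ Y X := by
    intro r Y X
    have h := eleibR X r Y
    rw [Prod.mk.injEq] at h
    have h1 := h.1
    rw [smul_neg] at h1
    exact neg_injective h1
  have σleib : ∀ (Y : B) (r : R) (X : A), σ Y (r • X) = r • σ Y X + aB Y r • X := by
    intro Y r X
    have h := eleibL Y r X
    rw [Prod.mk.injEq] at h
    exact h.1
  -- negation lemmas for ρ and σ
  have ρnegB : ∀ (X : A) (Y : B), ρ X (-Y) = -(ρ X Y) := by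
    intro X Y
    have h := ρsmul_arg (-1 : K) X Y
    rwa [neg_one_smul, neg_one_smul] at h
  have ρnegA : ∀ (X : A) (Y : B), ρ (-X) Y = -(ρ X Y) := by
    intro X Y
    have h := esmulL (-1 : K) X Y
    rw [Prod.mk.injEq] at h
    have h2 := h.2
    rwa [neg_one_smul, neg_one_smul] at h2
  have σnegA : ∀ (Y : B) (X : A), σ Y (-X) = -(σ Y X) := by
    intro Y X
    have h := σsmul_arg (-1 : K) Y X
    rwa [neg_one_smul, neg_one_smul] at h
  have σnegB : ∀ (Y : B) (X : A), σ (-Y) X = -(σ Y X) := by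
    intro Y X
    have h := σsmul_actK (-1 : K) Y X
    rwa [neg_one_smul, neg_one_smul] at h
  -- Jacobi identity on (X₁,0), (X₂,0), (0,Y)
  have jac1 : ∀ (X₁ X₂ : A) (Y : B),
      ((-(σ Y (brA X₁ X₂)), ρ (brA X₁ X₂) Y) : A × B)
        + (-(brA (σ Y X₂) X₁) + σ (ρ X₂ Y) X₁, -(ρ X₁ (ρ X₂ Y)))
        + (brA (σ Y X₁) X₂ + -(σ (ρ X₁ Y) X₂), ρ X₂ (ρ X₁ Y)) = 0 := by
    intro X₁ X₂ Y
    have h := hD.jacobi (X₁, 0) (X₂, 0) (0, Y)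
    rwa [hsubA, hdef (brA X₁ X₂) Y, hdef X₂ Y, hdef' X₁ Y,
      splitL (-(σ Y X₂)) (ρ X₂ Y) X₁, splitL (σ Y X₁) (-(ρ X₁ Y)) X₂,
      brAneg, σnegB, ρnegB, neg_neg] at h
  -- Jacobi identity on (0,Y₁), (0,Y₂), (X,0)
  have jac2 : ∀ (Y₁ Y₂ : B) (X : A),
      ((σ (brB Y₁ Y₂) X, -(ρ X (brB Y₁ Y₂))) : A × B)
        + (-(σ Y₁ (σ Y₂ X)), ρ (σ Y₂ X) Y₁ + -(brB (ρ X Y₂) Y₁))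
        + (σ Y₂ (σ Y₁ X), -(ρ (σ Y₁ X) Y₂) + brB (ρ X Y₁) Y₂) = 0 := by
    intro Y₁ Y₂ X
    have h := hD.jacobi (0, Y₁) (0, Y₂) (X, 0)
    rwa [hsubB, hdef' X (brB Y₁ Y₂), hdef' X Y₂, hdef X Y₁,
      splitR (σ Y₂ X) (-(ρ X Y₂)) Y₁, splitR (-(σ Y₁ X)) (ρ X Y₁) Y₂,
      brBneg, σnegA, ρnegA, neg_neg] at h
  refine ⟨⟨ρadd_arg, ρsmul_arg, ρadd_act, ρsmul_act, ρleib, ?_⟩,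
    ⟨σadd_arg, σsmul_arg, σadd_act, σsmul_act, σleib, ?_⟩, ?_, ?_, ?_⟩
  · -- bracket_act for ρ
    intro X₁ X₂ Y
    have h := congrArg Prod.snd (jac1 X₁ X₂ Y)
    simp only [Prod.snd_add, Prod.snd_zero] at h
    rw [← sub_eq_zero, ← h]
    abel
  · -- bracket_act for σ
    intro Y₁ Y₂ X
    have h := congrArg Prod.fst (jac2 Y₁ Y₂ X)
    simp only [Prod.fst_add, Prod.fst_zero] at h
    rw [← sub_eq_zero, ← h]
    abel
  · -- matched pair equation (i)
    intro X Y₁ Y₂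
    have h := congrArg Prod.snd (jac2 Y₁ Y₂ X)
    simp only [Prod.snd_add, Prod.snd_zero] at h
    rw [hantiB (ρ X Y₂) Y₁, ← sub_eq_zero, ← neg_eq_zero, ← h]
    abel
  · -- matched pair equation (ii)
    intro Y X₁ X₂
    have h := congrArg Prod.fst (jac1 X₁ X₂ Y)
    simp only [Prod.fst_add, Prod.fst_zero] at h
    rw [hantiA (σ Y X₂) X₁, ← sub_eq_zero, ← neg_eq_zero, ← h]
    abel
  · -- anchor equation (iii)
    intro X Y
    have cneg : ∀ u : A × B, c (-u) = -(c u) := by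
      intro u
      have h := hD.anchor_smul (-1 : R) u
      rwa [neg_one_smul, neg_one_smul] at h
    have h := hD.anchor_bracket (X, 0) (0, Y)
    rw [hdef, hancA, hancB] at h
    have hmk : ((-(σ Y X), ρ X Y) : A × B) = -((σ Y X, 0) : A × B) + (0, ρ X Y) := by
      simp
    rw [hmk, hD.anchor_add, cneg, hancA, hancB] at h
    rw [← lie_skew, ← h]
    abel
end

section
/- Let K be a field and let g and h be Lie algebras over K. Suppose the vector space direct sum g ⊕ h carries a Lie algebra bracket ⁅·,·⁆ over K such that g ⊕ 0 and 0 ⊕ h are Lie subalgebras with the given brackets, i.e. ⁅X1 ⊕ 0, X2 ⊕ 0⁆ = ⁅X1,X2⁆ ⊕ 0 and ⁅0 ⊕ Y1, 0 ⊕ Y2⁆ = 0 ⊕ ⁅Y1,Y2⁆. Define σ_Y(X) ∈ g and ρ_X(Y) ∈ h by ⁅X ⊕ 0, 0 ⊕ Y⁆ = (−σ_Y(X)) ⊕ ρ_X(Y). Then ρ: g → gl(h) and σ: h → gl(g) are representations, and the matched pair equations hold for (g, h, ρ, σ). -/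
/-- A `K`-bilinear, alternating bracket on the `K`-vector space `V` satisfying the
Jacobi identity, i.e. a Lie algebra structure on `V` over `K`. -/
structure IsLieBracket (K V : Type*) [Field K] [AddCommGroup V] [Module K V]
    (br : V → V → V) : Prop where
  add_left : ∀ x y z, br (x + y) z = br x z + br y z
  smul_left : ∀ (k : K) (x z : V), br (k • x) z = k • br x z
  add_right : ∀ x y z, br x (y + z) = br x y + br x z
  smul_right : ∀ (k : K) (x z : V), br x (k • z) = k • br x z
  alternate : ∀ x, br x x = 0
  jacobi : ∀ x y z, br (br x y) z + br (br y z) x + br (br z x) y = 0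

/-- A representation of the `K`-vector space `A`, equipped with the bracket `brA`,
on the `K`-vector space `V`: an assignment `a ↦ ρ_a` of `K`-linear endomorphisms of `V`,
`K`-linear in `a`, taking `brA` to the commutator bracket. -/
structure IsRep (K A V : Type*) [Field K] [AddCommGroup A] [Module K A]
    [AddCommGroup V] [Module K V] (brA : A → A → A) (ρ : A → V → V) : Prop where
  add_arg : ∀ (a : A) (v w : V), ρ a (v + w) = ρ a v + ρ a w
  smul_arg : ∀ (k : K) (a : A) (v : V), ρ a (k • v) = k • ρ a v
  add_act : ∀ (a b : A) (v : V), ρ (a + b) v = ρ a v + ρ b v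
  smul_act : ∀ (k : K) (a : A) (v : V), ρ (k • a) v = k • ρ a v
  bracket_act : ∀ (a b : A) (v : V), ρ (brA a b) v = ρ a (ρ b v) - ρ b (ρ a v)

/-!
Since `X ⊕ Y = (X ⊕ 0) + (0 ⊕ Y)`, bilinearity determines `br` from the brackets of `g` and `h`
and the mixed bracket `(-σ_Y X) ⊕ ρ_X Y`; in particular `ρ` and `σ` are bilinear. The Jacobi
identity on `X₁ ⊕ 0`, `X₂ ⊕ 0`, `0 ⊕ Y` then splits into an `h`-component, saying that `ρ`
preserves brackets, and a `g`-component, the matched pair equation for `σ`. Exchanging the roles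
of `g` and `h` gives the remaining two statements.
-/

namespace IsLieBracket

variable {K V W : Type*} [Field K] [AddCommGroup V] [Module K V] [AddCommGroup W] [Module K W]
  {br : W → W → W}

theorem neg_left (hbr : IsLieBracket K W br) (x y : W) : br (-x) y = -br x y := by
  simpa using hbr.smul_left (-1) x y

theorem swap (hbr : IsLieBracket K W br) (x y : W) : br y x = -br x y := by
  have h := hbr.alternate (x + y)
  rw [hbr.add_left, hbr.add_right, hbr.add_right, hbr.alternate, hbr.alternate, zero_add,
    add_zero] at h
  exact eq_neg_of_add_eq_zero_right h

theorem comap (hbr : IsLieBracket K W br) (e : V ≃ₗ[K] W) :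
    IsLieBracket K V (fun x y => e.symm (br (e x) (e y))) where
  add_left x y z := by simp [hbr.add_left]
  smul_left k x z := by simp [hbr.smul_left]
  add_right x y z := by simp [hbr.add_right]
  smul_right k x z := by simp [hbr.smul_right]
  alternate x := by simp [hbr.alternate]
  jacobi x y z := by
    simp only [LinearEquiv.apply_symm_apply]
    rw [← map_add, ← map_add, hbr.jacobi, map_zero]

end IsLieBracket

section MatchedPair

variable {K g h : Type*} [Field K] [LieRing g] [LieAlgebra K g] [LieRing h] [LieAlgebra K h]
  {br : g × h → g × h → g × h} {ρ : g → h → h} {σ : h → g → g}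

theorem rep_eq_snd_bracket (hdef : ∀ (X : g) (Y : h), br (X, 0) (0, Y) = (-(σ Y X), ρ X Y))
    (X : g) (Y : h) : ρ X Y = (br (X, 0) (0, Y)).2 := by
  rw [hdef]

theorem bracket_mk_inl (hbr : IsLieBracket K (g × h) br)
    (hsubg : ∀ X₁ X₂ : g, br (X₁, 0) (X₂, 0) = (⁅X₁, X₂⁆, 0))
    (hdef : ∀ (X : g) (Y : h), br (X, 0) (0, Y) = (-(σ Y X), ρ X Y)) (X X' : g) (Y : h) :
    br (X, Y) (X', 0) = (⁅X, X'⁆ + σ Y X', -ρ X' Y) := by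
  rw [show ((X, Y) : g × h) = (X, 0) + (0, Y) by simp, hbr.add_left, hsubg, hbr.swap, hdef]
  simp

theorem jacobi_inl_inl_inr (hbr : IsLieBracket K (g × h) br)
    (hsubg : ∀ X₁ X₂ : g, br (X₁, 0) (X₂, 0) = (⁅X₁, X₂⁆, 0))
    (hdef : ∀ (X : g) (Y : h), br (X, 0) (0, Y) = (-(σ Y X), ρ X Y)) (X₁ X₂ : g) (Y : h) :
    (⁅σ Y X₁, X₂⁆ + ⁅X₁, σ Y X₂⁆ + σ (ρ X₂ Y) X₁ - σ (ρ X₁ Y) X₂ - σ Y ⁅X₁, X₂⁆,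
      ρ ⁅X₁, X₂⁆ Y - (ρ X₁ (ρ X₂ Y) - ρ X₂ (ρ X₁ Y))) = 0 := by
  have hjac := hbr.jacobi (X₁, 0) (X₂, 0) (0, Y)
  rw [hsubg, hdef, hdef, hbr.swap (X₁, 0) (0, Y), hbr.neg_left, hdef,
    bracket_mk_inl hbr hsubg hdef, bracket_mk_inl hbr hsubg hdef] at hjac
  rw [← hjac, ← lie_skew X₁]
  ext <;>
    simp only [lie_skew, neg_lie, Prod.mk_add_mk, Prod.neg_mk, neg_add_rev, neg_neg] <;> abel

theorem isRep_of_bracket (hbr : IsLieBracket K (g × h) br)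
    (hsubg : ∀ X₁ X₂ : g, br (X₁, 0) (X₂, 0) = (⁅X₁, X₂⁆, 0))
    (hdef : ∀ (X : g) (Y : h), br (X, 0) (0, Y) = (-(σ Y X), ρ X Y)) :
    IsRep K g h (fun X₁ X₂ => ⁅X₁, X₂⁆) ρ where
  add_arg X Y₁ Y₂ := by
    simp only [rep_eq_snd_bracket hdef, ← Prod.snd_add, ← hbr.add_right, Prod.mk_add_mk, add_zero]
  smul_arg k X Y := by
    simp only [rep_eq_snd_bracket hdef, ← Prod.smul_snd, ← hbr.smul_right, Prod.smul_mk, smul_zero]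
  add_act X₁ X₂ Y := by
    simp only [rep_eq_snd_bracket hdef, ← Prod.snd_add, ← hbr.add_left, Prod.mk_add_mk, add_zero]
  smul_act k X Y := by
    simp only [rep_eq_snd_bracket hdef, ← Prod.smul_snd, ← hbr.smul_left, Prod.smul_mk, smul_zero]
  bracket_act X₁ X₂ Y :=
    sub_eq_zero.mp (Prod.mk_eq_zero.mp (jacobi_inl_inl_inr hbr hsubg hdef X₁ X₂ Y)).2

theorem matchedPair_of_bracket (hbr : IsLieBracket K (g × h) br)
    (hsubg : ∀ X₁ X₂ : g, br (X₁, 0) (X₂, 0) = (⁅X₁, X₂⁆, 0))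
    (hdef : ∀ (X : g) (Y : h), br (X, 0) (0, Y) = (-(σ Y X), ρ X Y)) (Y : h) (X₁ X₂ : g) :
    σ Y ⁅X₁, X₂⁆ = ⁅σ Y X₁, X₂⁆ + ⁅X₁, σ Y X₂⁆ + σ (ρ X₂ Y) X₁ - σ (ρ X₁ Y) X₂ :=
  (sub_eq_zero.mp (Prod.mk_eq_zero.mp (jacobi_inl_inl_inr hbr hsubg hdef X₁ X₂ Y)).1).symm

end MatchedPair

/-- **Lie algebra structures on a direct sum with both summands as subalgebras give
matched pairs.** Let `g` and `h` be Lie algebras over a field `K` and suppose `g ⊕ h`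
carries a Lie algebra bracket `br` over `K` such that `g ⊕ 0` and `0 ⊕ h` are Lie
subalgebras with the given brackets. Defining `σ_Y X ∈ g` and `ρ_X Y ∈ h` by
`⁅X ⊕ 0, 0 ⊕ Y⁆ = (−σ_Y X) ⊕ ρ_X Y`, the maps `ρ : g → gl(h)` and `σ : h → gl(g)`
are representations, and the matched pair equations hold for `(g, h, ρ, σ)`. -/
theorem lieAlgebra_on_sum_to_matchedPair
    (K g h : Type*) [Field K]
    [LieRing g] [LieAlgebra K g] [LieRing h] [LieAlgebra K h]
    (br : g × h → g × h → g × h)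
    (hbr : IsLieBracket K (g × h) br)
    (hsubg : ∀ X₁ X₂ : g, br (X₁, 0) (X₂, 0) = (⁅X₁, X₂⁆, 0))
    (hsubh : ∀ Y₁ Y₂ : h, br (0, Y₁) (0, Y₂) = (0, ⁅Y₁, Y₂⁆))
    (ρ : g → h → h) (σ : h → g → g)
    (hdef : ∀ (X : g) (Y : h), br (X, 0) (0, Y) = (-(σ Y X), ρ X Y)) :
    IsRep K g h (fun X₁ X₂ => ⁅X₁, X₂⁆) ρ
    ∧ IsRep K h g (fun Y₁ Y₂ => ⁅Y₁, Y₂⁆) σ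
    ∧ (∀ (X : g) (Y₁ Y₂ : h), ρ X ⁅Y₁, Y₂⁆ =
        ⁅ρ X Y₁, Y₂⁆ + ⁅Y₁, ρ X Y₂⁆ + ρ (σ Y₂ X) Y₁ - ρ (σ Y₁ X) Y₂)
    ∧ (∀ (Y : h) (X₁ X₂ : g), σ Y ⁅X₁, X₂⁆ =
        ⁅σ Y X₁, X₂⁆ + ⁅X₁, σ Y X₂⁆ + σ (ρ X₂ Y) X₁ - σ (ρ X₁ Y) X₂) := by
  -- The hypotheses are symmetric in `g` and `h`: transport `br` along `g × h ≃ h × g`.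
  set br' : h × g → h × g → h × g := fun p q => (br p.swap q.swap).swap
  have hbr' : IsLieBracket K (h × g) br' := hbr.comap (LinearEquiv.prodComm K h g)
  have hsubh' : ∀ Y₁ Y₂ : h, br' (Y₁, 0) (Y₂, 0) = (⁅Y₁, Y₂⁆, 0) := fun Y₁ Y₂ => by
    simp [br', hsubh]
  have hdef' : ∀ (Y : h) (X : g), br' (Y, 0) (0, X) = (-(ρ X Y), σ Y X) := fun Y X => by
    simp only [br', Prod.swap_prod_mk, hbr.swap (X, 0), hdef, Prod.neg_mk, neg_neg]
  exact ⟨isRep_of_bracket hbr hsubg hdef, isRep_of_bracket hbr' hsubh' hdef',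
    matchedPair_of_bracket hbr' hsubh' hdef', matchedPair_of_bracket hbr hsubg hdef⟩
end

section
/- Let K be a field, let g be a finite-dimensional Lie algebra over K, and let [·,·]_* be a Lie algebra bracket on the dual space g*. Let ρ_X(φ) = −φ∘ad_X be the coadjoint action of g on g*, and let σ_φ(X) ∈ g be defined by ψ(σ_φ(X)) = −([φ,ψ]_*)(X) for all ψ ∈ g*. Define the bracket on the direct sum g ⊕ g* (the Drinfel'd double bracket) by ⁅(X,φ), (Y,ψ)⁆ = ([X,Y] + σ_φ(Y) − σ_ψ(X), [φ,ψ]_* + ρ_X(ψ) − ρ_Y(φ)). Then this bilinear alternating bracket satisfies the Jacobi identity — so that g ⊕ g* is a Lie algebra in which g ⊕ 0 and 0 ⊕ g* are Lie subalgebras — if and only if the cocycle (Lie bialgebra) condition holds: for all X, Y ∈ g and φ, ψ ∈ g*, [φ,ψ]_*([X,Y]) = ([φ∘ad_X, ψ]_* + [φ, ψ∘ad_X]_*)(Y) − ([φ∘ad_Y, ψ]_* + [φ, ψ∘ad_Y]_*)(X), where φ∘ad_X denotes the functional Z ↦ φ([X,Z]). (The Drinfel'd double of a Lie bialgebra; it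 is the diagonal Lie algebra structure of the cotangent double Lie algebroid T*g ≅ g × g* of the Lie bialgebra (g, g*).) -/
/-- The functional `φ ∘ ad_X : Z ↦ φ(⁅X, Z⁆)`. -/
def adDual (K g : Type*) [Field K] [LieRing g] [LieAlgebra K g]
    (X : g) (φ : Module.Dual K g) : Module.Dual K g :=
  φ ∘ₗ LieAlgebra.ad K g X

/-- The coadjoint action of `g` on `g*`: `ρ_X φ = −φ ∘ ad_X`. -/
def coadj (K g : Type*) [Field K] [LieRing g] [LieAlgebra K g]
    (X : g) (φ : Module.Dual K g) : Module.Dual K g :=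
  -adDual K g X φ

/-- The Drinfel'd double bracket on `g ⊕ g*`:
`⁅(X,φ), (Y,ψ)⁆ = ([X,Y] + σ_φ Y − σ_ψ X, [φ,ψ]_* + ρ_X ψ − ρ_Y φ)`,
where `ρ` is the coadjoint action of `g` on `g*` and `σ` the coadjoint action of `g*`
on `g`. -/
def drinfeldBracket (K g : Type*) [Field K] [LieRing g] [LieAlgebra K g]
    (brS : Module.Dual K g → Module.Dual K g → Module.Dual K g)
    (σ : Module.Dual K g → g → g) :
    g × Module.Dual K g → g × Module.Dual K g → g × Module.Dual K g :=
  fun p q => (⁅p.1, q.1⁆ + σ p.2 q.1 - σ q.2 p.1,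
              brS p.2 q.2 + coadj K g p.1 q.2 - coadj K g q.1 p.2)

section helpers
variable {K g : Type*} [Field K] [LieRing g] [LieAlgebra K g]
  {brS : Module.Dual K g → Module.Dual K g → Module.Dual K g}
  (hS : IsLieBracket K (Module.Dual K g) brS)
  {σ : Module.Dual K g → g → g}
  (hσ : ∀ (φ : Module.Dual K g) (X : g) (ψ : Module.Dual K g),
      ψ (σ φ X) = -(brS φ ψ) X)

theorem adDual_apply (X : g) (φ : Module.Dual K g) (Z : g) :
    adDual K g X φ Z = φ ⁅X, Z⁆ := by
  simp [adDual, LieAlgebra.ad_apply]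

theorem adDual_add_right (X : g) (φ ψ : Module.Dual K g) :
    adDual K g X (φ + ψ) = adDual K g X φ + adDual K g X ψ :=
  LinearMap.ext fun Z => by simp [adDual_apply]

theorem adDual_smul_right (k : K) (X : g) (φ : Module.Dual K g) :
    adDual K g X (k • φ) = k • adDual K g X φ :=
  LinearMap.ext fun Z => by simp [adDual_apply]

theorem adDual_add (X Y : g) (φ : Module.Dual K g) :
    adDual K g (X + Y) φ = adDual K g X φ + adDual K g Y φ :=
  LinearMap.ext fun Z => by simp [adDual_apply, add_lie]

theorem adDual_smul (k : K) (X : g) (φ : Module.Dual K g) :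
    adDual K g (k • X) φ = k • adDual K g X φ :=
  LinearMap.ext fun Z => by simp [adDual_apply, smul_lie]

include hS in
theorem brS_zero_left (y : Module.Dual K g) : brS 0 y = 0 := by
  have := hS.smul_left 0 0 y; simpa using this

include hS in
theorem brS_neg_left (x y : Module.Dual K g) : brS (-x) y = -brS x y := by
  have := hS.smul_left (-1) x y; simpa using this

include hS in
theorem brS_sub_left (x y z : Module.Dual K g) : brS (x - y) z = brS x z - brS y z := by
  rw [sub_eq_add_neg, hS.add_left, brS_neg_left hS, sub_eq_add_neg]

include hS in
theorem brS_zero_right (y : Module.Dual K g) : brS y 0 = 0 := by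
  have := hS.smul_right 0 y 0; simpa using this

include hS in
theorem brS_neg_right (x y : Module.Dual K g) : brS x (-y) = -brS x y := by
  have := hS.smul_right (-1) x y; simpa using this

include hS in
theorem brS_sub_right (x y z : Module.Dual K g) : brS x (y - z) = brS x y - brS x z := by
  rw [sub_eq_add_neg, hS.add_right, brS_neg_right hS, sub_eq_add_neg]

include hS in
theorem brS_anti (x y : Module.Dual K g) : brS x y = -brS y x := by
  have h := hS.alternate (x + y)
  rw [hS.add_left, hS.add_right, hS.add_right, hS.alternate, hS.alternate] at h
  have h2 : brS x y + brS y x = 0 := by rw [zero_add, add_zero] at h; exact h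
  rw [eq_neg_iff_add_eq_zero]; exact h2

theorem dual_sep {v w : g} (h : ∀ ξ : Module.Dual K g, ξ v = ξ w) : v = w := by
  have : ∀ ξ : Module.Dual K g, ξ (v - w) = 0 := fun ξ => by
    rw [map_sub, h ξ, sub_self]
  have := (Module.forall_dual_apply_eq_zero_iff K (v - w)).mp this
  exact sub_eq_zero.mp this

include hS hσ in
theorem sig_add_left (φ ψ : Module.Dual K g) (X : g) :
    σ (φ + ψ) X = σ φ X + σ ψ X :=
  dual_sep fun ξ => by rw [hσ, hS.add_left, map_add, hσ, hσ]; simp [add_comm]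

include hS hσ in
theorem sig_smul_left (k : K) (φ : Module.Dual K g) (X : g) :
    σ (k • φ) X = k • σ φ X :=
  dual_sep fun ξ => by rw [hσ, hS.smul_left]; simp [hσ, smul_neg]

include hσ in
theorem sig_add_right (φ : Module.Dual K g) (X Y : g) :
    σ φ (X + Y) = σ φ X + σ φ Y :=
  dual_sep fun ξ => by rw [hσ, map_add, map_add, hσ, hσ]; ring

include hσ in
theorem sig_smul_right (k : K) (φ : Module.Dual K g) (X : g) :
    σ φ (k • X) = k • σ φ X :=
  dual_sep fun ξ => by rw [hσ, map_smul, map_smul, hσ, smul_neg]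

include hS hσ in
theorem sig_zero_left (X : g) : σ 0 X = 0 :=
  dual_sep fun ξ => by rw [hσ, brS_zero_left hS]; simp

include hS hσ in
theorem sig_sub_left (φ ψ : Module.Dual K g) (X : g) :
    σ (φ - ψ) X = σ φ X - σ ψ X :=
  dual_sep fun ξ => by
    rw [hσ, brS_sub_left hS, map_sub, hσ, hσ, LinearMap.sub_apply]; ring

include hσ in
theorem sig_lie (φ : Module.Dual K g) (Y Z : g) (ξ : Module.Dual K g) :
    ξ ⁅σ φ Y, Z⁆ = brS φ (adDual K g Z ξ) Y := by
  have h1 : ξ ⁅σ φ Y, Z⁆ = -(adDual K g Z ξ) (σ φ Y) := by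
    rw [adDual_apply, ← lie_skew, map_neg]
  rw [h1, hσ, neg_neg]

end helpers

/-- **The Drinfel'd double of a Lie bialgebra.** Let `g` be a finite-dimensional Lie
algebra over a field `K` and let `[·,·]_* = brS` be a Lie algebra bracket on `g*`. With
`ρ_X φ = −φ ∘ ad_X` the coadjoint action of `g` on `g*` and `σ` the coadjoint action of
`g*` on `g` (characterized by `ψ (σ_φ X) = −[φ, ψ]_* X`), the Drinfel'd double bracket
on `g ⊕ g*` is bilinear and alternating, and it satisfies the Jacobi identity — so that
`g ⊕ g*` is a Lie algebra in which `g ⊕ 0` and `0 ⊕ g*` are Lie subalgebras — if and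
only if the cocycle (Lie bialgebra) condition holds. -/
theorem drinfeldDouble_jacobi_iff_lieBialgebra
    (K g : Type*) [Field K] [LieRing g] [LieAlgebra K g] [FiniteDimensional K g]
    (brS : Module.Dual K g → Module.Dual K g → Module.Dual K g)
    (hS : IsLieBracket K (Module.Dual K g) brS)
    (σ : Module.Dual K g → g → g)
    (hσ : ∀ (φ : Module.Dual K g) (X : g) (ψ : Module.Dual K g),
      ψ (σ φ X) = -(brS φ ψ) X) :
    (∀ p q r, drinfeldBracket K g brS σ (p + q) r =
      drinfeldBracket K g brS σ p r + drinfeldBracket K g brS σ q r)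
    ∧ (∀ (k : K) (p q), drinfeldBracket K g brS σ (k • p) q =
      k • drinfeldBracket K g brS σ p q)
    ∧ (∀ p q r, drinfeldBracket K g brS σ p (q + r) =
      drinfeldBracket K g brS σ p q + drinfeldBracket K g brS σ p r)
    ∧ (∀ (k : K) (p q), drinfeldBracket K g brS σ p (k • q) =
      k • drinfeldBracket K g brS σ p q)
    ∧ (∀ p, drinfeldBracket K g brS σ p p = 0)
    ∧ ((∀ p q r,
          drinfeldBracket K g brS σ (drinfeldBracket K g brS σ p q) r
          + drinfeldBracket K g brS σ (drinfeldBracket K g brS σ q r) p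
          + drinfeldBracket K g brS σ (drinfeldBracket K g brS σ r p) q = 0)
        ↔ (∀ (X Y : g) (φ ψ : Module.Dual K g),
            brS φ ψ ⁅X, Y⁆ =
              (brS (adDual K g X φ) ψ + brS φ (adDual K g X ψ)) Y
                - (brS (adDual K g Y φ) ψ + brS φ (adDual K g Y ψ)) X)) := by
  refine ⟨?_, ?_, ?_, ?_, ?_, ?_⟩
  · intro p q r
    simp only [drinfeldBracket, coadj, Prod.ext_iff, Prod.fst_add, Prod.snd_add,
      add_lie, sig_add_left hS hσ, sig_add_right hσ, hS.add_left, adDual_add, adDual_add_right, Prod.mk_add_mk]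
    try constructor <;> abel
  · intro k p q
    simp only [drinfeldBracket, coadj, Prod.ext_iff, Prod.smul_fst, Prod.smul_snd,
      smul_lie, sig_smul_left hS hσ, sig_smul_right hσ, hS.smul_left, adDual_smul, adDual_smul_right,
      Prod.smul_mk, smul_add, smul_sub, smul_neg]
    try constructor <;> abel
  · intro p q r
    simp only [drinfeldBracket, coadj, Prod.ext_iff, Prod.fst_add, Prod.snd_add,
      lie_add, sig_add_left hS hσ, sig_add_right hσ, hS.add_right, adDual_add, adDual_add_right, Prod.mk_add_mk]
    try constructor <;> abel
  · intro k p q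
    simp only [drinfeldBracket, coadj, Prod.ext_iff, Prod.smul_fst, Prod.smul_snd,
      lie_smul, sig_smul_left hS hσ, sig_smul_right hσ, hS.smul_right, adDual_smul, adDual_smul_right,
      Prod.smul_mk, smul_add, smul_sub, smul_neg]
    try constructor <;> abel
  · intro p
    simp [drinfeldBracket, coadj, Prod.ext_iff, hS.alternate]
  · have adz : ∀ X : g, adDual K g X (0 : Module.Dual K g) = 0 := fun X =>
      LinearMap.ext fun Z => by simp [adDual_apply]
    constructor
    · intro h X Y φ ψ
      have h0 := congrArg (fun p : g × Module.Dual K g => ψ p.1) (h (X, 0) (Y, 0) (0, φ))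
      simp only [drinfeldBracket, coadj, Prod.fst_add, Prod.snd_add, adz,
        sig_zero_left hS hσ, brS_zero_left hS, brS_zero_right hS, neg_zero, add_zero,
        zero_add, sub_zero, zero_sub, zero_lie, lie_zero, add_lie, sub_lie, neg_lie,
        lie_add, lie_sub, lie_neg, map_add, map_sub, map_neg, map_zero,
        hσ, sig_lie hσ, hS.add_left, hS.add_right, brS_sub_left hS, brS_sub_right hS,
        brS_neg_left hS, brS_neg_right hS, LinearMap.add_apply, LinearMap.sub_apply,
        LinearMap.neg_apply, LinearMap.zero_apply, Prod.fst_zero] at h0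
      simp only [LinearMap.add_apply]
      linear_combination h0
    · intro hc p q r
      obtain ⟨X, φ⟩ := p; obtain ⟨Y, ψ⟩ := q; obtain ⟨Z, χ⟩ := r
      have hc' : ∀ (X Y : g) (φ ψ : Module.Dual K g), brS φ ψ ⁅X, Y⁆ =
          brS (adDual K g X φ) ψ Y + brS φ (adDual K g X ψ) Y
            - (brS (adDual K g Y φ) ψ X + brS φ (adDual K g Y ψ) X) := by
        intro X Y φ ψ
        have := hc X Y φ ψ
        simpa only [LinearMap.add_apply] using this
      have hj : ∀ (α β γ : Module.Dual K g) (v : g),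
          brS (brS α β) γ v + brS (brS β γ) α v + brS (brS γ α) β v = 0 := by
        intro α β γ v
        have := DFunLike.congr_fun (hS.jacobi α β γ) v
        simpa only [LinearMap.add_apply, LinearMap.zero_apply] using this
      have hb : ∀ (α β : Module.Dual K g) (v : g), brS α β v = -brS β α v := by
        intro α β v; rw [brS_anti hS]; simp
      have hlb : ∀ (α β γ : Module.Dual K g) (v : g),
          brS α (brS β γ) v = brS (brS α β) γ v + brS β (brS α γ) v := by
        intro α β γ v
        have h1 := hj β γ α v
        have h2 : brS (brS γ α) β v = brS β (brS α γ) v := by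
          rw [brS_anti hS γ α, brS_neg_left hS, brS_anti hS β (brS α γ)]
        linear_combination hb α (brS β γ) v - h1 + h2
      have hsk : ∀ (A B : g) (θ : Module.Dual K g), θ ⁅A, B⁆ = -θ ⁅B, A⁆ := by
        intro A B θ
        have hAB : ⁅A, B⁆ = -⁅B, A⁆ := (lie_skew A B).symm
        rw [hAB, map_neg]
      refine Prod.ext_iff.mpr ⟨?_, ?_⟩
      · simp only [Prod.fst_add, Prod.fst_zero]
        refine dual_sep (K := K) fun ξ => ?_
        rw [map_zero]
        simp only [drinfeldBracket, coadj, map_add, map_sub, map_neg,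
          add_lie, sub_lie, neg_lie, lie_add, lie_sub, lie_neg,
          hσ, sig_lie hσ, hS.add_left, hS.add_right, brS_sub_left hS, brS_sub_right hS,
          brS_neg_left hS, brS_neg_right hS, LinearMap.add_apply, LinearMap.sub_apply,
          LinearMap.neg_apply]
        have h := congrArg ξ (lie_jacobi X Y Z)
        rw [map_add, map_add, map_zero] at h
        have hg : ξ ⁅⁅X, Y⁆, Z⁆ + ξ ⁅⁅Y, Z⁆, X⁆ + ξ ⁅⁅Z, X⁆, Y⁆ = 0 := by
          linear_combination hsk ⁅X, Y⁆ Z ξ + hsk ⁅Y, Z⁆ X ξ + hsk ⁅Z, X⁆ Y ξ - h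
        linear_combination hg + hc' X Y χ ξ + hc' Y Z φ ξ + hc' Z X ψ ξ
          + hlb φ ψ ξ Z + hlb ψ χ ξ X + hlb χ φ ξ Y
      · simp only [Prod.snd_add, Prod.snd_zero]
        refine LinearMap.ext fun V => ?_
        rw [LinearMap.zero_apply]
        simp only [drinfeldBracket, coadj, map_add, map_sub, map_neg,
          add_lie, sub_lie, neg_lie, lie_add, lie_sub, lie_neg,
          hσ, sig_lie hσ, hS.add_left, hS.add_right, brS_sub_left hS, brS_sub_right hS,
          brS_neg_left hS, brS_neg_right hS, adDual_apply, LinearMap.add_apply,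
          LinearMap.sub_apply, LinearMap.neg_apply]
        have hLχ : χ ⁅X, ⁅Y, V⁆⁆ = χ ⁅⁅X, Y⁆, V⁆ + χ ⁅Y, ⁅X, V⁆⁆ := by
          rw [← map_add, ← leibniz_lie]
        have hLφ : φ ⁅Y, ⁅Z, V⁆⁆ = φ ⁅⁅Y, Z⁆, V⁆ + φ ⁅Z, ⁅Y, V⁆⁆ := by
          rw [← map_add, ← leibniz_lie]
        have hLψ : ψ ⁅Z, ⁅X, V⁆⁆ = ψ ⁅⁅Z, X⁆, V⁆ + ψ ⁅X, ⁅Z, V⁆⁆ := by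
          rw [← map_add, ← leibniz_lie]
        linear_combination hj φ ψ χ V + hLχ + hLφ + hLψ
          + hc' Z V φ ψ + hc' X V ψ χ + hc' Y V χ φ
          + hb (adDual K g Z ψ) φ V + hb (adDual K g X χ) ψ V + hb (adDual K g Y φ) χ V
          - hb (adDual K g V φ) ψ Z - hb (adDual K g V ψ) χ X - hb (adDual K g V χ) φ Y
end
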